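/- For every set P of formulas and all formulas A, B: if ⊢_P ; A∨B (i.e., the P-sequent with empty antecedent, empty body and stoup A∨B is derivable in ML_P), then ⊢_P ;A or ⊢_P A; or ⊢_P ;B or ⊢_P B;. -/

import Mathlib

/-- Formulas of ML_P: `F ::= 0 | ⊥ | X | F∧F | F∨F | F→F` with variables from `V`. -/
inductive Fml (V : Type) : Type where
  | zero : Fml V
  | bot : Fml V
  | var : V → Fml V
  | and : Fml V → Fml V → Fml V
  | or : Fml V → Fml V → Fml V
  | imp : Fml V → Fml V → Fml V

/-- All formulas of the sequent `Γ ⊢ Δ;Ξ` belong to the set `S`. -/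
def SeqIn {V : Type} (S : Set (Fml V)) (Γ Δ : Multiset (Fml V)) (Ξ : Option (Fml V)) : Prop :=
  (∀ A ∈ Γ, A ∈ S) ∧ (∀ A ∈ Δ, A ∈ S) ∧ (∀ A ∈ Ξ, A ∈ S)

/-- Derivability of the `P`-sequent `Γ ⊢ Δ;Ξ` in the system ML_P, where additionally
every sequent occurring in the derivation is required to consist of formulas of `S`
(take `S := Set.univ` for plain derivability), and the cut rules `cut₁`, `cut₂` are
allowed only when the flag `cut` is `true`. -/
inductive MLPG {V : Type} (P S : Set (Fml V)) (cut : Bool) :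
    Multiset (Fml V) → Multiset (Fml V) → Option (Fml V) → Prop where
  | ax (A : Fml V) : SeqIn S {A} 0 (some A) → MLPG P S cut {A} 0 (some A)
  | cut1 {Γ Γ' Δ Δ' : Multiset (Fml V)} {A : Fml V} {Ξ : Option (Fml V)} :
      cut = true → SeqIn S (Γ + Γ') (Δ + Δ') Ξ →
      MLPG P S cut Γ Δ (some A) → MLPG P S cut (Γ' + {A}) Δ' Ξ →
      MLPG P S cut (Γ + Γ') (Δ + Δ') Ξ
  | cut2 {Γ Γ' Δ Δ' : Multiset (Fml V)} {A : Fml V} {Ξ : Option (Fml V)} :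
      cut = true → SeqIn S (Γ + Γ') (Δ + Δ') Ξ →
      MLPG P S cut Γ (Δ + {A}) Ξ → MLPG P S cut (Γ' + {A}) Δ' none →
      MLPG P S cut (Γ + Γ') (Δ + Δ') Ξ
  | der {Γ Δ : Multiset (Fml V)} {A : Fml V} :
      A ∈ P → SeqIn S Γ (Δ + {A}) none →
      MLPG P S cut Γ Δ (some A) → MLPG P S cut Γ (Δ + {A}) none
  | cl {Γ Δ : Multiset (Fml V)} {A : Fml V} {Ξ : Option (Fml V)} :
      SeqIn S (Γ + {A}) Δ Ξ →
      MLPG P S cut (Γ + {A, A}) Δ Ξ → MLPG P S cut (Γ + {A}) Δ Ξ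
  | cr {Γ Δ : Multiset (Fml V)} {A : Fml V} {Ξ : Option (Fml V)} :
      SeqIn S Γ (Δ + {A}) Ξ →
      MLPG P S cut Γ (Δ + {A, A}) Ξ → MLPG P S cut Γ (Δ + {A}) Ξ
  | wl {Γ Δ : Multiset (Fml V)} {A : Fml V} {Ξ : Option (Fml V)} :
      SeqIn S (Γ + {A}) Δ Ξ →
      MLPG P S cut Γ Δ Ξ → MLPG P S cut (Γ + {A}) Δ Ξ
  | wr {Γ Δ : Multiset (Fml V)} {A : Fml V} {Ξ : Option (Fml V)} :
      A ∈ P → SeqIn S Γ (Δ + {A}) Ξ →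
      MLPG P S cut Γ Δ Ξ → MLPG P S cut Γ (Δ + {A}) Ξ
  | zeroL {Γ Δ : Multiset (Fml V)} {Ξ : Option (Fml V)} :
      (∀ A ∈ Δ, A ∈ P) → SeqIn S (Γ + {Fml.zero}) Δ Ξ →
      MLPG P S cut (Γ + {Fml.zero}) Δ Ξ
  | botL : SeqIn S {Fml.bot} 0 none → MLPG P S cut {Fml.bot} 0 none
  | and1L {Γ Δ : Multiset (Fml V)} {A B C : Fml V} :
      A ∉ P → B ∉ P → SeqIn S (Γ + {Fml.and A B}) Δ (some C) →
      MLPG P S cut (Γ + {A, B}) Δ (some C) →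
      MLPG P S cut (Γ + {Fml.and A B}) Δ (some C)
  | and2L {Γ Δ : Multiset (Fml V)} {A B : Fml V} :
      SeqIn S (Γ + {Fml.and A B}) Δ none →
      MLPG P S cut (Γ + {A, B}) Δ none →
      MLPG P S cut (Γ + {Fml.and A B}) Δ none
  | and1R {Γ Γ' Δ Δ' : Multiset (Fml V)} {A B : Fml V} :
      SeqIn S (Γ + Γ') (Δ + Δ') (some (Fml.and A B)) →
      MLPG P S cut Γ Δ (some A) → MLPG P S cut Γ' Δ' (some B) →
      MLPG P S cut (Γ + Γ') (Δ + Δ') (some (Fml.and A B))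
  | and2R {Γ Γ' Δ Δ' : Multiset (Fml V)} {A B : Fml V} :
      SeqIn S (Γ + Γ') (Δ + Δ') (some (Fml.and A B)) →
      MLPG P S cut Γ (Δ + {A}) none → MLPG P S cut Γ' (Δ' + {B}) none →
      MLPG P S cut (Γ + Γ') (Δ + Δ') (some (Fml.and A B))
  | and3R {Γ Γ' Δ Δ' : Multiset (Fml V)} {A B : Fml V} :
      SeqIn S (Γ + Γ') (Δ + Δ') (some (Fml.and A B)) →
      MLPG P S cut Γ Δ (some A) → MLPG P S cut Γ' (Δ' + {B}) none →
      MLPG P S cut (Γ + Γ') (Δ + Δ') (some (Fml.and A B))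
  | and4R {Γ Γ' Δ Δ' : Multiset (Fml V)} {A B : Fml V} :
      SeqIn S (Γ + Γ') (Δ + Δ') (some (Fml.and A B)) →
      MLPG P S cut Γ (Δ + {A}) none → MLPG P S cut Γ' Δ' (some B) →
      MLPG P S cut (Γ + Γ') (Δ + Δ') (some (Fml.and A B))
  | or1L {Γ Δ : Multiset (Fml V)} {A B C : Fml V} :
      A ∉ P → B ∉ P → SeqIn S (Γ + {Fml.or A B}) Δ (some C) →
      MLPG P S cut (Γ + {A}) Δ (some C) → MLPG P S cut (Γ + {B}) Δ (some C) →
      MLPG P S cut (Γ + {Fml.or A B}) Δ (some C)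
  | or2L {Γ Δ : Multiset (Fml V)} {A B : Fml V} :
      SeqIn S (Γ + {Fml.or A B}) Δ none →
      MLPG P S cut (Γ + {A}) Δ none → MLPG P S cut (Γ + {B}) Δ none →
      MLPG P S cut (Γ + {Fml.or A B}) Δ none
  | or1R {Γ Δ : Multiset (Fml V)} {A B : Fml V} :
      SeqIn S Γ Δ (some (Fml.or A B)) →
      MLPG P S cut Γ Δ (some A) → MLPG P S cut Γ Δ (some (Fml.or A B))
  | or2R {Γ Δ : Multiset (Fml V)} {A B : Fml V} :
      SeqIn S Γ Δ (some (Fml.or A B)) →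
      MLPG P S cut Γ Δ (some B) → MLPG P S cut Γ Δ (some (Fml.or A B))
  | or3R {Γ Δ : Multiset (Fml V)} {A B : Fml V} :
      SeqIn S Γ Δ (some (Fml.or A B)) →
      MLPG P S cut Γ (Δ + {A}) none → MLPG P S cut Γ Δ (some (Fml.or A B))
  | or4R {Γ Δ : Multiset (Fml V)} {A B : Fml V} :
      SeqIn S Γ Δ (some (Fml.or A B)) →
      MLPG P S cut Γ (Δ + {B}) none → MLPG P S cut Γ Δ (some (Fml.or A B))
  | imp1L {Γ Γ' Δ Δ' : Multiset (Fml V)} {A B C : Fml V} :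
      B ∉ P → SeqIn S (Γ + Γ' + {Fml.imp A B}) (Δ + Δ') (some C) →
      MLPG P S cut (Γ + {B}) Δ (some C) → MLPG P S cut Γ' Δ' (some A) →
      MLPG P S cut (Γ + Γ' + {Fml.imp A B}) (Δ + Δ') (some C)
  | imp2L {Γ Γ' Δ Δ' : Multiset (Fml V)} {A B : Fml V} :
      SeqIn S (Γ + Γ' + {Fml.imp A B}) (Δ + Δ') none →
      MLPG P S cut (Γ + {B}) Δ none → MLPG P S cut Γ' Δ' (some A) →
      MLPG P S cut (Γ + Γ' + {Fml.imp A B}) (Δ + Δ') none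
  | imp3L {Γ Γ' Δ Δ' : Multiset (Fml V)} {A B : Fml V} {Ξ : Option (Fml V)} :
      SeqIn S (Γ + Γ' + {Fml.imp A B}) (Δ + Δ') Ξ →
      MLPG P S cut (Γ + {B}) Δ none → MLPG P S cut Γ' (Δ' + {A}) Ξ →
      MLPG P S cut (Γ + Γ' + {Fml.imp A B}) (Δ + Δ') Ξ
  | imp1R {Γ Δ : Multiset (Fml V)} {A B : Fml V} :
      SeqIn S Γ Δ (some (Fml.imp A B)) →
      MLPG P S cut (Γ + {A}) Δ (some B) → MLPG P S cut Γ Δ (some (Fml.imp A B))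
  | imp2R {Γ Δ : Multiset (Fml V)} {A B : Fml V} :
      SeqIn S Γ Δ (some (Fml.imp A B)) →
      MLPG P S cut (Γ + {A}) (Δ + {B}) none → MLPG P S cut Γ Δ (some (Fml.imp A B))

/-- `Γ ⊢_P Δ;Ξ` : the `P`-sequent `Γ ⊢ Δ;Ξ` is derivable in ML_P. -/
def MLPDer {V : Type} (P : Set (Fml V)) (Γ Δ : Multiset (Fml V)) (Ξ : Option (Fml V)) : Prop :=
  MLPG P Set.univ true Γ Δ Ξ

/-!
A Kleene–Aczel slash argument, relativised to the body. For a multiset `Θ` of `P`-formulas,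
`Slash P X Θ` reads `X` constructively over the body `Θ`: a conjunction or disjunction asks that
both, resp. one, of its components be realized at `Θ` (slashed, and derivable in the stoup from
body `Θ`) or be derivable in the body next to `Θ`, and an implication is read over all extensions
`Θ + W` of the body. Slash and realizability survive every change of body that preserves
derivability (`BodyLE`: weakening, contraction, cutting a body formula), so an induction over
derivations, cuts included, shows: if the hypotheses of a derivable `Γ ⊢ Δ;Ξ` are realized at
`Θ`, then its stoup formula is realized at `Θ + Δ` or `⊢ Θ,Δ;` is derivable. For `⊢ ;A∨B` the
second alternative is refuted by the valuation making every variable true, and the slash of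
`A∨B` at the empty body gives the four cases.
-/

section SlashArgument

variable {V : Type} {P : Set (Fml V)}

theorem Multiset.forall_mem_add {α : Type*} {p : α → Prop} {s t : Multiset α} :
    (∀ a ∈ s + t, p a) ↔ (∀ a ∈ s, p a) ∧ ∀ a ∈ t, p a := by
  simp only [Multiset.mem_add, or_imp, forall_and]

theorem Multiset.forall_mem_add_singleton {α : Type*} {p : α → Prop} {s : Multiset α} {a : α} :
    (∀ b ∈ s + {a}, p b) ↔ (∀ b ∈ s, p b) ∧ p a := by
  simp [or_imp, forall_and]

theorem seqIn_univ {Γ Δ : Multiset (Fml V)} {Ξ : Option (Fml V)} : SeqIn Set.univ Γ Δ Ξ := by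
  simp [SeqIn]

def Fml.Holds : Fml V → Prop
  | zero => False
  | bot => False
  | var _ => True
  | and A B => A.Holds ∧ B.Holds
  | or A B => A.Holds ∨ B.Holds
  | imp A B => A.Holds → B.Holds

namespace MLPG

variable {S : Set (Fml V)} {c : Bool} {Γ Δ : Multiset (Fml V)} {Ξ : Option (Fml V)}

theorem body_mem (h : MLPG P S c Γ Δ Ξ) : ∀ D ∈ Δ, D ∈ P := by
  induction h <;> simp_all [or_imp, forall_and]

theorem exists_holds (h : MLPG P S c Γ Δ Ξ) (hΓ : ∀ G ∈ Γ, G.Holds) :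
    (∃ D ∈ Δ, D.Holds) ∨ ∃ X ∈ Ξ, X.Holds := by
  induction h <;>
    simp only [Multiset.mem_add, Multiset.mem_singleton, Multiset.insert_eq_cons,
      Multiset.mem_cons, Multiset.notMem_zero, or_imp, forall_and, forall_eq, or_and_right,
      exists_or, exists_eq_left, exists_eq_left', Option.mem_def, Option.some.injEq,
      reduceCtorEq, false_and, exists_false, or_false, false_or, Fml.Holds] at * <;>
    grind

end MLPG

namespace MLPDer

variable {Γ Γ₀ Δ Δ' Θ Λ W : Multiset (Fml V)} {Ξ : Option (Fml V)} {A B G : Fml V}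

theorem body_mem (h : MLPDer P Γ Δ Ξ) : ∀ D ∈ Δ, D ∈ P := MLPG.body_mem h

theorem not_empty : ¬ MLPDer P 0 0 none := fun h => by
  simpa using MLPG.exists_holds h (by simp)

theorem weaken_body (h : MLPDer P Γ Δ Ξ) (hW : ∀ x ∈ W, x ∈ P) : MLPDer P Γ (Δ + W) Ξ := by
  induction W using Multiset.induction_on with
  | empty => simpa using h
  | cons a s ih =>
    rw [Multiset.forall_mem_cons] at hW
    rw [Multiset.add_cons, ← Multiset.singleton_add, add_comm]
    exact MLPG.wr hW.1 seqIn_univ (ih hW.2)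

theorem contract_body (h : MLPDer P Γ (Δ + W) Ξ) (hW : W ⊆ Δ) : MLPDer P Γ Δ Ξ := by
  induction W using Multiset.induction_on with
  | empty => simpa using h
  | cons a s ih =>
    obtain ⟨t, rfl⟩ := Multiset.exists_cons_of_mem (hW (Multiset.mem_cons_self a s))
    refine ih ?_ fun x hx => hW (Multiset.mem_cons_of_mem hx)
    have e₁ : a ::ₘ t + a ::ₘ s = t + s + {a, a} := by
      simp only [Multiset.insert_eq_cons, ← Multiset.singleton_add]; abel
    have e₂ : a ::ₘ t + s = t + s + {a} := by
      simp only [← Multiset.singleton_add]; abel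
    rw [e₁] at h
    rw [e₂]
    exact MLPG.cr seqIn_univ h

theorem body_congr (h : MLPDer P Γ Δ Ξ) (hmem : ∀ x, x ∈ Δ ↔ x ∈ Δ') : MLPDer P Γ Δ' Ξ :=
  (add_comm Δ Δ' ▸ h.weaken_body fun x hx => h.body_mem x ((hmem x).2 hx)).contract_body
    fun x hx => (hmem x).1 hx

theorem cut_stoup (hG : MLPDer P 0 Θ (some G)) (h : MLPDer P (Γ₀ + {G}) Δ Ξ) :
    MLPDer P Γ₀ (Θ + Δ) Ξ := by
  have h' := MLPG.cut1 rfl seqIn_univ hG h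
  rwa [zero_add] at h'

theorem cut_body (hG : MLPDer P 0 (Θ + {G}) none) (h : MLPDer P (Γ₀ + {G}) Δ none) :
    MLPDer P Γ₀ (Θ + Δ) none := by
  have h' := MLPG.cut2 rfl seqIn_univ hG h
  rwa [zero_add] at h'

theorem cut_hyps (hΘ : ∀ x ∈ Θ, x ∈ P)
    (hΓ : ∀ G ∈ Γ, MLPDer P 0 Θ (some G) ∨ Ξ = none ∧ MLPDer P 0 (Θ + {G}) none)
    (h : MLPDer P (Γ₀ + Γ) Δ Ξ) : MLPDer P Γ₀ (Θ + Δ) Ξ := by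
  induction Γ using Multiset.induction_on generalizing Δ with
  | empty => simpa [add_comm] using h.weaken_body hΘ
  | cons G s ih =>
    rw [Multiset.forall_mem_cons] at hΓ
    rw [Multiset.add_cons, ← Multiset.singleton_add, add_comm] at h
    have hcut : MLPDer P (Γ₀ + s) (Θ + Δ) Ξ := by
      rcases hΓ.1 with hG | ⟨rfl, hG⟩
      · exact hG.cut_stoup h
      · exact hG.cut_body h
    exact (ih hΓ.2 hcut).body_congr fun x => by simp only [Multiset.mem_add]; tauto

theorem cut_imp (hAB : MLPDer P 0 Θ (some (A.imp B))) (hB : MLPDer P {B} Λ none) :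
    MLPDer P {A} (Θ + Λ) none := by
  have hB' : MLPDer P (0 + {B}) Λ none := by rwa [zero_add]
  have h := MLPG.imp2L seqIn_univ hB' (MLPG.ax A seqIn_univ)
  rw [zero_add, add_zero] at h
  exact hAB.cut_stoup h

end MLPDer

def BodyLE (P : Set (Fml V)) (Θ Θ' : Multiset (Fml V)) : Prop :=
  ∀ ⦃Γ Δ Ξ⦄, MLPDer P Γ (Θ + Δ) Ξ → MLPDer P Γ (Θ' + Δ) Ξ

section BodyLE

variable {Θ Θ' Θ'' W Λ : Multiset (Fml V)} {A : Fml V}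

theorem BodyLE.trans (h : BodyLE P Θ Θ') (h' : BodyLE P Θ' Θ'') : BodyLE P Θ Θ'' :=
  fun _ _ _ d => h' (h d)

theorem BodyLE.add_right (h : BodyLE P Θ Θ') (W : Multiset (Fml V)) :
    BodyLE P (Θ + W) (Θ' + W) := fun _ _ _ d => by
  rw [add_assoc] at d ⊢
  exact h d

theorem BodyLE.add_left (h : BodyLE P Θ Θ') (W : Multiset (Fml V)) :
    BodyLE P (W + Θ) (W + Θ') := by
  rw [add_comm W Θ, add_comm W Θ']
  exact h.add_right W

theorem BodyLE.derivation {Γ : Multiset (Fml V)} {Ξ : Option (Fml V)} (h : BodyLE P Θ Θ')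
    (d : MLPDer P Γ Θ Ξ) : MLPDer P Γ Θ' Ξ := by
  rw [← add_zero Θ] at d
  simpa using h d

theorem bodyLE_add (hW : ∀ x ∈ W, x ∈ P) : BodyLE P Θ (Θ + W) := fun _ _ _ d =>
  (d.weaken_body hW).body_congr fun x => by simp only [Multiset.mem_add]; tauto

theorem bodyLE_of_mem_iff (h : ∀ x, x ∈ Θ ↔ x ∈ Θ') : BodyLE P Θ Θ' := fun _ _ _ d =>
  d.body_congr fun x => by simp only [Multiset.mem_add, h]

theorem bodyLE_of_cut (hA : MLPDer P {A} Λ none) : BodyLE P {A} Λ := fun Γ Δ Ξ d => by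
  rw [add_comm] at d ⊢
  have hA' : MLPDer P (0 + {A}) Λ none := by rwa [zero_add]
  have h := MLPG.cut2 rfl seqIn_univ d hA'
  rwa [add_zero] at h

end BodyLE

def Slash (P : Set (Fml V)) : Fml V → Multiset (Fml V) → Prop
  | .zero, _ => False
  | .bot, _ => False
  | .var _, _ => True
  | .and A B, Θ =>
      ((Slash P A Θ ∧ MLPDer P 0 Θ (some A)) ∨ MLPDer P 0 (Θ + {A}) none) ∧
      ((Slash P B Θ ∧ MLPDer P 0 Θ (some B)) ∨ MLPDer P 0 (Θ + {B}) none)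
  | .or A B, Θ =>
      ((Slash P A Θ ∧ MLPDer P 0 Θ (some A)) ∨ MLPDer P 0 (Θ + {A}) none) ∨
      ((Slash P B Θ ∧ MLPDer P 0 Θ (some B)) ∨ MLPDer P 0 (Θ + {B}) none)
  | .imp A B, Θ => ∀ W : Multiset (Fml V), (∀ x ∈ W, x ∈ P) →
      Slash P A W ∧ MLPDer P 0 W (some A) →
      ((Slash P B (Θ + W) ∧ MLPDer P 0 (Θ + W) (some B)) ∨ MLPDer P 0 (Θ + W + {B}) none) ∨
        MLPDer P 0 (Θ + W) none

def Realized (P : Set (Fml V)) (X : Fml V) (Θ : Multiset (Fml V)) : Prop :=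
  Slash P X Θ ∧ MLPDer P 0 Θ (some X)

def WeakRealized (P : Set (Fml V)) (X : Fml V) (Θ : Multiset (Fml V)) : Prop :=
  Realized P X Θ ∨ MLPDer P 0 (Θ + {X}) none

section Slash

variable {Γ Γ₀ Δ Θ Θ' Θ₁ Θ₂ W : Multiset (Fml V)} {Ξ : Option (Fml V)} {A B X : Fml V}

theorem slash_and : Slash P (A.and B) Θ ↔ WeakRealized P A Θ ∧ WeakRealized P B Θ := Iff.rfl

theorem slash_or : Slash P (A.or B) Θ ↔ WeakRealized P A Θ ∨ WeakRealized P B Θ := Iff.rfl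

theorem slash_imp : Slash P (A.imp B) Θ ↔ ∀ W, (∀ x ∈ W, x ∈ P) → Realized P A W →
    WeakRealized P B (Θ + W) ∨ MLPDer P 0 (Θ + W) none := Iff.rfl

theorem WeakRealized.mono_of_slash (h : BodyLE P Θ Θ') (hs : Slash P X Θ → Slash P X Θ') :
    WeakRealized P X Θ → WeakRealized P X Θ' :=
  Or.imp (And.imp hs h.derivation) (@h _ _ _)

theorem Slash.mono (h : BodyLE P Θ Θ') : Slash P X Θ → Slash P X Θ' := by
  induction X generalizing Θ Θ' with
  | zero | bot | var => exact id
  | and A B ihA ihB =>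
    exact And.imp (WeakRealized.mono_of_slash h (ihA h)) (WeakRealized.mono_of_slash h (ihB h))
  | or A B ihA ihB =>
    exact Or.imp (WeakRealized.mono_of_slash h (ihA h)) (WeakRealized.mono_of_slash h (ihB h))
  | imp A B _ ihB =>
    intro hs W hW hA
    have hW' := h.add_right W
    exact (hs W hW hA).imp (WeakRealized.mono_of_slash hW' (ihB hW')) hW'.derivation

theorem Realized.mono (h : BodyLE P Θ Θ') : Realized P X Θ → Realized P X Θ' :=
  And.imp (Slash.mono h) h.derivation

theorem WeakRealized.mono (h : BodyLE P Θ Θ') : WeakRealized P X Θ → WeakRealized P X Θ' :=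
  WeakRealized.mono_of_slash h (Slash.mono h)

theorem Realized.weaken (h : Realized P X Θ) (hW : ∀ x ∈ W, x ∈ P) : Realized P X (Θ + W) :=
  h.mono (bodyLE_add hW)

theorem Realized.body_mem (h : Realized P X Θ) : ∀ x ∈ Θ, x ∈ P := h.2.body_mem

theorem WeakRealized.body_mem (h : WeakRealized P X Θ) : ∀ x ∈ Θ, x ∈ P :=
  h.elim Realized.body_mem fun d => (Multiset.forall_mem_add.1 d.body_mem).1

theorem WeakRealized.realized (h : WeakRealized P X Θ) (hX : X ∉ P) : Realized P X Θ :=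
  h.resolve_right fun d => hX (d.body_mem X (by simp))

theorem Realized.and (hA : WeakRealized P A Θ₁) (hB : WeakRealized P B Θ₂) :
    Realized P (A.and B) (Θ₁ + Θ₂) := by
  refine ⟨⟨hA.mono (bodyLE_add hB.body_mem),
    add_comm Θ₂ Θ₁ ▸ hB.mono (bodyLE_add hA.body_mem)⟩, ?_⟩
  rw [← zero_add (0 : Multiset (Fml V))]
  rcases hA with ⟨-, dA⟩ | dA <;> rcases hB with ⟨-, dB⟩ | dB
  · exact MLPG.and1R seqIn_univ dA dB
  · exact MLPG.and3R seqIn_univ dA dB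
  · exact MLPG.and4R seqIn_univ dA dB
  · exact MLPG.and2R seqIn_univ dA dB

theorem Realized.or_left (h : WeakRealized P A Θ) : Realized P (A.or B) Θ :=
  ⟨Or.inl h, h.elim (fun hA => MLPG.or1R seqIn_univ hA.2) (MLPG.or3R seqIn_univ)⟩

theorem Realized.or_right (h : WeakRealized P B Θ) : Realized P (A.or B) Θ :=
  ⟨Or.inr h, h.elim (fun hB => MLPG.or2R seqIn_univ hB.2) (MLPG.or4R seqIn_univ)⟩

theorem Slash.imp_apply (hf : Slash P (A.imp B) Θ) (ha : Realized P A Θ) :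
    WeakRealized P B Θ ∨ MLPDer P 0 Θ none := by
  have hmem : ∀ x, x ∈ Θ + Θ ↔ x ∈ Θ := by simp
  exact (slash_imp.1 hf Θ ha.body_mem ha).imp (WeakRealized.mono (bodyLE_of_mem_iff hmem))
    (bodyLE_of_mem_iff hmem).derivation

theorem MLPDer.cut_realized_hyps (hΘ : ∀ x ∈ Θ, x ∈ P) (hΓ : ∀ G ∈ Γ, Realized P G Θ)
    (h : MLPDer P (Γ₀ + Γ) Δ Ξ) : MLPDer P Γ₀ (Θ + Δ) Ξ :=
  h.cut_hyps hΘ fun G hG => Or.inl (hΓ G hG).2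

theorem MLPDer.cut_weakRealized_hyps (hΘ : ∀ x ∈ Θ, x ∈ P)
    (hΓ : ∀ G ∈ Γ, WeakRealized P G Θ) (h : MLPDer P Γ Δ none) : MLPDer P 0 (Θ + Δ) none :=
  (zero_add Γ ▸ h).cut_hyps hΘ fun G hG => (hΓ G hG).imp And.right (⟨rfl, ·⟩)

end Slash

def Resolved (P : Set (Fml V)) (Θ : Multiset (Fml V)) (Ξ : Option (Fml V)) : Prop :=
  (∃ X ∈ Ξ, Realized P X Θ) ∨ MLPDer P 0 Θ none

def SlashValid (P : Set (Fml V)) (Γ Δ : Multiset (Fml V)) (Ξ : Option (Fml V)) : Prop :=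
  ∀ Θ, (∀ x ∈ Θ, x ∈ P) → (∀ G ∈ Γ, Realized P G Θ) → Resolved P (Θ + Δ) Ξ

def WeakSlashValid (P : Set (Fml V)) (Γ Δ : Multiset (Fml V)) (A : Fml V) : Prop :=
  ∀ Θ, (∀ x ∈ Θ, x ∈ P) → (∀ G ∈ Γ, Realized P G Θ) →
    WeakRealized P A (Θ + Δ) ∨ MLPDer P 0 (Θ + Δ) none

section SlashValid

variable {Γ Γ' Δ Δ' Θ Θ' : Multiset (Fml V)} {Ξ : Option (Fml V)} {A B : Fml V}

@[simp] theorem resolved_some : Resolved P Θ (some A) ↔ Realized P A Θ ∨ MLPDer P 0 Θ none := by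
  simp [Resolved]

@[simp] theorem resolved_none : Resolved P Θ none ↔ MLPDer P 0 Θ none := by
  simp [Resolved]

theorem Resolved.mono (h : BodyLE P Θ Θ') : Resolved P Θ Ξ → Resolved P Θ' Ξ :=
  Or.imp (fun ⟨X, hX, hr⟩ => ⟨X, hX, hr.mono h⟩) h.derivation

theorem slashValid_ax : SlashValid P {A} 0 (some A) := fun Θ _ hΓ => by
  simpa using Or.inl (hΓ A (Multiset.mem_singleton_self A))

namespace SlashValid

theorem weak_of_some (h : SlashValid P Γ Δ (some A)) : WeakSlashValid P Γ Δ A :=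
  fun Θ hΘ hΓ => (resolved_some.1 (h Θ hΘ hΓ)).imp_left Or.inl

theorem weak_of_body (h : SlashValid P Γ (Δ + {A}) none) : WeakSlashValid P Γ Δ A :=
  fun Θ hΘ hΓ => Or.inl (Or.inr (by simpa [add_assoc] using h Θ hΘ hΓ))

theorem mono_hyps (h : SlashValid P Γ Δ Ξ) (hsub : Γ ⊆ Γ') : SlashValid P Γ' Δ Ξ :=
  fun Θ hΘ hΓ => h Θ hΘ fun G hG => hΓ G (hsub hG)

theorem mono_body (h : SlashValid P Γ Δ Ξ) (hle : BodyLE P Δ Δ') : SlashValid P Γ Δ' Ξ :=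
  fun Θ hΘ hΓ => (h Θ hΘ hΓ).mono (hle.add_left Θ)

theorem cut1 (h₁ : SlashValid P Γ Δ (some A)) (h₂ : SlashValid P (Γ' + {A}) Δ' Ξ)
    (d₂ : MLPDer P (Γ' + {A}) Δ' Ξ) : SlashValid P (Γ + Γ') (Δ + Δ') Ξ := by
  intro Θ hΘ hΓ
  rw [Multiset.forall_mem_add] at hΓ
  rw [← add_assoc]
  rcases resolved_some.1 (h₁ Θ hΘ hΓ.1) with hA | hΘΔ
  · have hΔ := (Multiset.forall_mem_add.1 hA.body_mem).2
    exact h₂ _ hA.body_mem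
      (Multiset.forall_mem_add_singleton.2 ⟨fun G hG => (hΓ.2 G hG).weaken hΔ, hA⟩)
  · exact Or.inr (hΘΔ.weaken_body d₂.body_mem)

theorem elim_body (h : SlashValid P Γ (Δ + {A}) Ξ)
    (hA : ∀ Θ, (∀ x ∈ Θ, x ∈ P) → (∀ G ∈ Γ', Realized P G Θ) → MLPDer P {A} (Θ + Δ') none) :
    SlashValid P (Γ + Γ') (Δ + Δ') Ξ := by
  intro Θ hΘ hΓ
  rw [Multiset.forall_mem_add] at hΓ
  have hcut := (bodyLE_of_cut (hA Θ hΘ hΓ.2)).add_left (Θ + Δ)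
  rw [add_assoc] at hcut
  refine (h Θ hΘ hΓ.1).mono (hcut.trans (bodyLE_of_mem_iff fun x => ?_))
  simp only [Multiset.mem_add]
  tauto

theorem cut2 (h₁ : SlashValid P Γ (Δ + {A}) Ξ) (d₂ : MLPDer P (Γ' + {A}) Δ' none) :
    SlashValid P (Γ + Γ') (Δ + Δ') Ξ :=
  h₁.elim_body fun _ hΘ hΓ' => (add_comm Γ' {A} ▸ d₂).cut_realized_hyps hΘ hΓ'

theorem cl (h : SlashValid P (Γ + {A, A}) Δ Ξ) : SlashValid P (Γ + {A}) Δ Ξ := by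
  refine h.mono_hyps fun x => ?_
  simp only [Multiset.mem_add, Multiset.insert_eq_cons, Multiset.mem_cons, Multiset.mem_singleton]
  tauto

theorem cr (h : SlashValid P Γ (Δ + {A, A}) Ξ) : SlashValid P Γ (Δ + {A}) Ξ := by
  refine h.mono_body (bodyLE_of_mem_iff fun x => ?_)
  simp only [Multiset.mem_add, Multiset.insert_eq_cons, Multiset.mem_cons, Multiset.mem_singleton]
  tauto

theorem der (hA : A ∈ P) (h : SlashValid P Γ Δ (some A)) : SlashValid P Γ (Δ + {A}) none := by
  intro Θ hΘ hΓ
  rw [resolved_none, ← add_assoc]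
  rcases resolved_some.1 (h Θ hΘ hΓ) with hr | hempty
  · exact MLPG.der hA seqIn_univ hr.2
  · exact hempty.weaken_body (by simpa)

theorem and1L (hA : A ∉ P) (hB : B ∉ P) (h : SlashValid P (Γ + {A, B}) Δ Ξ) :
    SlashValid P (Γ + {A.and B}) Δ Ξ := by
  intro Θ hΘ hΓ
  obtain ⟨hΓ, hAB⟩ := Multiset.forall_mem_add_singleton.1 hΓ
  refine h Θ hΘ ?_
  simp only [Multiset.forall_mem_add, Multiset.insert_eq_cons, Multiset.forall_mem_cons,
    Multiset.mem_singleton, forall_eq]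
  exact ⟨hΓ, (slash_and.1 hAB.1).1.realized hA, (slash_and.1 hAB.1).2.realized hB⟩

theorem and2L (d : MLPDer P (Γ + {A, B}) Δ none) : SlashValid P (Γ + {A.and B}) Δ none := by
  intro Θ hΘ hΓ
  obtain ⟨hΓ, hAB⟩ := Multiset.forall_mem_add_singleton.1 hΓ
  refine resolved_none.2 (d.cut_weakRealized_hyps hΘ ?_)
  simp only [Multiset.forall_mem_add, Multiset.insert_eq_cons, Multiset.forall_mem_cons,
    Multiset.mem_singleton, forall_eq]
  exact ⟨fun G hG => Or.inl (hΓ G hG), hAB.1⟩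

theorem or1L (hA : A ∉ P) (hB : B ∉ P) (h₁ : SlashValid P (Γ + {A}) Δ Ξ)
    (h₂ : SlashValid P (Γ + {B}) Δ Ξ) : SlashValid P (Γ + {A.or B}) Δ Ξ := by
  intro Θ hΘ hΓ
  obtain ⟨hΓ, hAB⟩ := Multiset.forall_mem_add_singleton.1 hΓ
  rcases slash_or.1 hAB.1 with hA' | hB'
  · exact h₁ Θ hΘ (Multiset.forall_mem_add_singleton.2 ⟨hΓ, hA'.realized hA⟩)
  · exact h₂ Θ hΘ (Multiset.forall_mem_add_singleton.2 ⟨hΓ, hB'.realized hB⟩)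

theorem or2L (d₁ : MLPDer P (Γ + {A}) Δ none) (d₂ : MLPDer P (Γ + {B}) Δ none) :
    SlashValid P (Γ + {A.or B}) Δ none := by
  intro Θ hΘ hΓ
  obtain ⟨hΓ, hAB⟩ := Multiset.forall_mem_add_singleton.1 hΓ
  have hΓ' : ∀ G ∈ Γ, WeakRealized P G Θ := fun G hG => Or.inl (hΓ G hG)
  rw [resolved_none]
  rcases slash_or.1 hAB.1 with hA | hB
  · exact d₁.cut_weakRealized_hyps hΘ (Multiset.forall_mem_add_singleton.2 ⟨hΓ', hA⟩)
  · exact d₂.cut_weakRealized_hyps hΘ (Multiset.forall_mem_add_singleton.2 ⟨hΓ', hB⟩)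

theorem imp_apply (h : SlashValid P Γ Δ (some A)) (B : Fml V) :
    WeakSlashValid P (Γ + {A.imp B}) Δ B := by
  intro Θ hΘ hΓ
  obtain ⟨hΓ, hAB⟩ := Multiset.forall_mem_add_singleton.1 hΓ
  rcases resolved_some.1 (h Θ hΘ hΓ) with hA | hempty
  · have hΔ := (Multiset.forall_mem_add.1 hA.body_mem).2
    exact (hAB.weaken hΔ).1.imp_apply hA
  · exact Or.inr hempty

theorem imp3L (d₁ : MLPDer P (Γ + {B}) Δ none) (h₂ : SlashValid P Γ' (Δ' + {A}) Ξ) :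
    SlashValid P (Γ + Γ' + {A.imp B}) (Δ + Δ') Ξ := by
  have h := h₂.elim_body (Γ' := Γ + {A.imp B}) (Δ' := Δ) fun Θ hΘ hΓ => by
    obtain ⟨hΓ, hAB⟩ := Multiset.forall_mem_add_singleton.1 hΓ
    have hB := (add_comm Γ {B} ▸ d₁).cut_realized_hyps hΘ hΓ
    exact (hAB.2.cut_imp hB).body_congr (by simp only [Multiset.mem_add]; tauto)
  refine (h.mono_body (bodyLE_of_mem_iff ?_)).mono_hyps ?_ <;>
    · intro x; simp only [Multiset.mem_add]; tauto

end SlashValid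

namespace WeakSlashValid

theorem of_not_mem (h : WeakSlashValid P Γ Δ B) (hB : B ∉ P) : SlashValid P Γ Δ (some B) :=
  fun Θ hΘ hΓ => resolved_some.2 ((h Θ hΘ hΓ).imp_left (·.realized hB))

theorem cut (h₁ : WeakSlashValid P Γ' Δ' B) (d₂ : MLPDer P (Γ + {B}) Δ none) :
    SlashValid P (Γ + Γ') (Δ + Δ') none := by
  intro Θ hΘ hΓ
  rw [Multiset.forall_mem_add] at hΓ
  rw [resolved_none]
  rcases h₁ Θ hΘ hΓ.2 with hB | hempty
  · have hΔ' := (Multiset.forall_mem_add.1 hB.body_mem).2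
    have hΓ' : ∀ G ∈ Γ + {B}, WeakRealized P G (Θ + Δ') :=
      Multiset.forall_mem_add_singleton.2 ⟨fun G hG => Or.inl ((hΓ.1 G hG).weaken hΔ'), hB⟩
    exact (d₂.cut_weakRealized_hyps hB.body_mem hΓ').body_congr
      (by simp only [Multiset.mem_add]; tauto)
  · exact (hempty.weaken_body d₂.body_mem).body_congr (by simp only [Multiset.mem_add]; tauto)

theorem and (h₁ : WeakSlashValid P Γ Δ A) (h₂ : WeakSlashValid P Γ' Δ' B) :
    SlashValid P (Γ + Γ') (Δ + Δ') (some (A.and B)) := by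
  intro Θ hΘ hΓ
  rw [Multiset.forall_mem_add] at hΓ
  have hle : BodyLE P (Θ + Δ + (Θ + Δ')) (Θ + (Δ + Δ')) :=
    bodyLE_of_mem_iff fun x => by simp only [Multiset.mem_add]; tauto
  rw [resolved_some]
  rcases h₁ Θ hΘ hΓ.1 with hA | hempty₁ <;> rcases h₂ Θ hΘ hΓ.2 with hB | hempty₂
  · exact Or.inl ((Realized.and hA hB).mono hle)
  · exact Or.inr (hle.derivation
      (add_comm (Θ + Δ') _ ▸ hempty₂.weaken_body (WeakRealized.body_mem hA)))
  · exact Or.inr (hle.derivation (hempty₁.weaken_body (WeakRealized.body_mem hB)))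
  · exact Or.inr (hle.derivation (hempty₁.weaken_body hempty₂.body_mem))

theorem or_left (h : WeakSlashValid P Γ Δ A) : SlashValid P Γ Δ (some (A.or B)) :=
  fun Θ hΘ hΓ => resolved_some.2 ((h Θ hΘ hΓ).imp_left Realized.or_left)

theorem or_right (h : WeakSlashValid P Γ Δ B) : SlashValid P Γ Δ (some (A.or B)) :=
  fun Θ hΘ hΓ => resolved_some.2 ((h Θ hΘ hΓ).imp_left Realized.or_right)

theorem imp (d : MLPDer P Γ Δ (some (A.imp B))) (h : WeakSlashValid P (Γ + {A}) Δ B) :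
    SlashValid P Γ Δ (some (A.imp B)) := by
  intro Θ hΘ hΓ
  refine resolved_some.2 (Or.inl ⟨?_, (zero_add Γ ▸ d).cut_realized_hyps hΘ hΓ⟩)
  intro W hW hA
  have hΘW : ∀ x ∈ Θ + W, x ∈ P := Multiset.forall_mem_add.2 ⟨hΘ, hW⟩
  have hΓA : ∀ G ∈ Γ + {A}, Realized P G (Θ + W) :=
    Multiset.forall_mem_add_singleton.2
      ⟨fun G hG => (hΓ G hG).weaken hW, add_comm W Θ ▸ Realized.weaken hA hΘ⟩
  rw [add_right_comm]
  exact h (Θ + W) hΘW hΓA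

end WeakSlashValid

end SlashValid

theorem MLPDer.slashValid {Γ Δ : Multiset (Fml V)} {Ξ : Option (Fml V)} (h : MLPDer P Γ Δ Ξ) :
    SlashValid P Γ Δ Ξ := by
  induction h with
  | ax => exact slashValid_ax
  | cut1 _ _ _ d₂ ih₁ ih₂ => exact ih₁.cut1 ih₂ d₂
  | cut2 _ _ _ d₂ ih₁ _ => exact ih₁.cut2 d₂
  | der hA _ _ ih => exact ih.der hA
  | cl _ _ ih => exact ih.cl
  | cr _ _ ih => exact ih.cr
  | wl _ _ ih => exact ih.mono_hyps (Multiset.subset_of_le (Multiset.le_add_right _ _))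
  | wr hA _ _ ih => exact ih.mono_body (bodyLE_add (by simpa))
  | zeroL _ _ => exact fun _ _ hΓ => (hΓ .zero (by simp)).1.elim
  | botL _ => exact fun _ _ hΓ => (hΓ .bot (by simp)).1.elim
  | and1L hA hB _ _ ih => exact ih.and1L hA hB
  | and2L _ d _ => exact SlashValid.and2L d
  | and1R _ _ _ ih₁ ih₂ => exact ih₁.weak_of_some.and ih₂.weak_of_some
  | and2R _ _ _ ih₁ ih₂ => exact ih₁.weak_of_body.and ih₂.weak_of_body
  | and3R _ _ _ ih₁ ih₂ => exact ih₁.weak_of_some.and ih₂.weak_of_body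
  | and4R _ _ _ ih₁ ih₂ => exact ih₁.weak_of_body.and ih₂.weak_of_some
  | or1L hA hB _ _ _ ih₁ ih₂ => exact SlashValid.or1L hA hB ih₁ ih₂
  | or2L _ d₁ d₂ _ _ => exact SlashValid.or2L d₁ d₂
  | or1R _ _ ih => exact ih.weak_of_some.or_left
  | or2R _ _ ih => exact ih.weak_of_some.or_right
  | or3R _ _ ih => exact ih.weak_of_body.or_left
  | or4R _ _ ih => exact ih.weak_of_body.or_right
  | @imp1L Γ Γ' Δ Δ' A B _ hB _ d₁ _ ih₁ ih₂ =>
    rw [show Γ + Γ' + {A.imp B} = Γ' + {A.imp B} + Γ by abel, add_comm Δ]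
    exact ((ih₂.imp_apply B).of_not_mem hB).cut1 ih₁ d₁
  | @imp2L Γ Γ' Δ Δ' A B _ d₁ _ _ ih₂ =>
    rw [add_assoc]
    exact (ih₂.imp_apply B).cut d₁
  | imp3L _ d₁ _ _ ih₂ => exact SlashValid.imp3L d₁ ih₂
  | imp1R _ d ih => exact ih.weak_of_some.imp (MLPG.imp1R seqIn_univ d)
  | imp2R _ d ih => exact ih.weak_of_body.imp (MLPG.imp2R seqIn_univ d)

end SlashArgument

theorem or_stoup_cases {V : Type} (P : Set (Fml V)) (A B : Fml V)
    (h : MLPDer P 0 0 (some (Fml.or A B))) :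
    MLPDer P 0 0 (some A) ∨ MLPDer P 0 {A} none ∨
      MLPDer P 0 0 (some B) ∨ MLPDer P 0 {B} none := by
  have hvalid := h.slashValid 0 (by simp) (by simp)
  rw [zero_add, resolved_some] at hvalid
  rcases hvalid with ⟨hslash, -⟩ | hempty
  · rcases slash_or.1 hslash with (⟨-, hA⟩ | hA) | (⟨-, hB⟩ | hB)
    · exact Or.inl hA
    · exact Or.inr (Or.inl (by simpa using hA))
    · exact Or.inr (Or.inr (Or.inl hB))
    · exact Or.inr (Or.inr (Or.inr (by simpa using hB)))
  · exact absurd hempty MLPDer.not_empty
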